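/- arXiv:1210.1982 — 2 statements merged into one kernel-verified Lean document; each statement's English description precedes it below -/
import Mathlib

section
/- Let R be a commutative noetherian ring, M a finitely generated R-module, and x₁, …, xₙ elements of R such that the nonfree locus of M is contained in V(x₁, …, xₙ). Then there exists a positive integer k such that for all i > 0 and all finitely generated R-modules N, each element x_j^k annihilates Ext^i_R(M, N). -/
/-!
Let `I` be the ideal of those `r : R` for which `r • 𝟙 M` factors through a projective module.
Every `r ∈ I` kills `Ext^i(M, -)` for `i > 0`: `Ext` is `R`-linear in its first argument and
vanishes in positive degrees on projectives. If `M_p` is free, clearing denominators in the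
maps `M_p ≅ R_p^m` and back gives some `s ∉ p` in `I`, because `M` is finitely presented.
Hence `V(I)` lies in the nonfree locus, so in `V(x₁, …, xₙ)`, i.e. every `x_j` lies in `√I`,
and one power `k` works for all `j` since `(x₁, …, xₙ)` is finitely generated.
-/

open CategoryTheory Opposite Limits ZeroObject

universe u

namespace CategoryTheory

variable {R : Type*} [Semiring R] {C : Type*} [Category C] [Preadditive C] [Linear R C]

instance Linear.opposite : Linear R Cᵒᵖ where
  homModule X Y := Equiv.module R (opEquiv X Y)
  smul_comp _ _ _ _ _ _ := Quiver.Hom.unop_inj (Linear.comp_smul _ _ _ _ _ _)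
  comp_smul _ _ _ _ _ _ := Quiver.Hom.unop_inj (Linear.smul_comp _ _ _ _ _ _)

end CategoryTheory

namespace HomologicalComplex

variable {R : Type*} [Semiring R] {C : Type*} [Category C] [Preadditive C]
  [CategoryTheory.Linear R C] {ι : Type*} {c : ComplexShape ι}

instance [CategoryWithHomology C] (i : ι) : (homologyFunctor C c i).Linear R where
  map_smul f r := ShortComplex.homologyMap_smul ((shortComplexFunctor C c i).map f) r

instance [HasZeroObject C] [DecidableEq ι] (j : ι) : (single C c j).Linear R where
  map_smul f r := by
    refine HomologicalComplex.hom_ext _ _ fun i => ?_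
    by_cases h : i = j
    · subst h; simp [single_map_f_self, Linear.smul_comp, Linear.comp_smul]
    · exact (isZero_single_obj_X c _ _ _ h).eq_of_src _ _

end HomologicalComplex

namespace CategoryTheory.Functor

variable {R : Type*} [Semiring R] {C D : Type*} [Category C] [Category D] [Abelian C]
  [HasProjectiveResolutions C] [Abelian D] [CategoryTheory.Linear R C] [CategoryTheory.Linear R D]

lemma leftDerived_map_smul (F : C ⥤ D) [F.Additive] [F.Linear R] (n : ℕ) {X Y : C}
    (r : R) (f : X ⟶ Y) :
    (F.leftDerived n).map (r • f) = r • (F.leftDerived n).map f := by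
  let P := projectiveResolution X
  let Q := projectiveResolution Y
  have w : (r • P.lift f Q) ≫ Q.π = P.π ≫ (ChainComplex.single₀ C).map (r • f) := by simp
  rw [leftDerived_map_eq F n (r • f) _ w, leftDerived_map_eq F n f _ (P.lift_commutes f Q),
    map_smul, CategoryTheory.Linear.smul_comp, CategoryTheory.Linear.comp_smul]

end CategoryTheory.Functor

section FactorThruProjective

variable (R : Type*) [CommRing R] {C : Type*} [Category C] [Preadditive C] [Linear R C]
  [HasZeroObject C] [HasBinaryBiproducts C]

def factorThruProjectiveIdeal (X : C) : Ideal R where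
  carrier := {r | ∃ (P : C) (_ : Projective P) (f : X ⟶ P) (g : P ⟶ X),
    f ≫ g = r • 𝟙 X}
  zero_mem' := ⟨0, inferInstance, 0, 0, by simp⟩
  add_mem' := by
    rintro a b ⟨P, _, f, g, hfg⟩ ⟨Q, _, f', g', hfg'⟩
    exact ⟨P ⊞ Q, inferInstance, biprod.lift f f', biprod.desc g g',
      by simp [hfg, hfg', add_smul]⟩
  smul_mem' c r := by
    rintro ⟨P, _, f, g, hfg⟩
    exact ⟨P, inferInstance, f, c • g, by simp [hfg, smul_smul]⟩

end FactorThruProjective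

section Ext

variable {R : Type*} [CommRing R] {C : Type*} [Category C] [Abelian C]
  [CategoryTheory.Linear R C] [EnoughProjectives C]

instance (Y : C) : ((linearYoneda R C).obj Y).rightOp.Linear R where
  map_smul f r := by
    apply Quiver.Hom.unop_inj
    ext g
    exact Linear.smul_comp _ _ _ _ _ _

lemma Ext_map_smul (n : ℕ) {X X' : C} (r : R) (f : X ⟶ X') (Y : C) :
    ((Ext R C n).map (r • f).op).app Y = r • ((Ext R C n).map f.op).app Y := by
  change ((((linearYoneda R C).obj Y).rightOp.leftDerived n).map (r • f)).unop = _
  rw [Functor.leftDerived_map_smul]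
  rfl

lemma Ext_smul_eq_zero_of_mem_factorThruProjectiveIdeal {X Y : C} {r : R}
    (hr : r ∈ factorThruProjectiveIdeal R X) (n : ℕ)
    (e : ((Ext R C (n + 1)).obj (op X)).obj Y) : r • e = 0 := by
  obtain ⟨P, _, f, g, hfg⟩ := hr
  have hzero : ((Ext R C (n + 1)).map (r • 𝟙 X).op).app Y = 0 := by
    rw [← hfg, op_comp, Functor.map_comp, NatTrans.comp_app,
      (isZero_Ext_succ_of_projective (R := R) P Y n).eq_of_tgt
        (((Ext R C (n + 1)).map g.op).app Y) 0, zero_comp]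
  rw [Ext_map_smul, op_id, CategoryTheory.Functor.map_id, NatTrans.id_app] at hzero
  simpa using congrArg (fun φ => φ.hom e) hzero

end Ext

lemma Module.exists_comp_eq_smul_id_of_isLocalizedModule {R : Type*} [CommRing R]
    (S : Submonoid R) {M N L : Type*} [AddCommGroup M] [Module R M] [AddCommGroup N] [Module R N]
    [AddCommGroup L] [Module R L] [Module.FinitePresentation R M] [Module.FinitePresentation R N]
    (fM : M →ₗ[R] L) (fN : N →ₗ[R] L) [IsLocalizedModule S fM] [IsLocalizedModule S fN] :
    ∃ (f : M →ₗ[R] N) (g : N →ₗ[R] M) (s : S), g ∘ₗ f = (s : R) • LinearMap.id := by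
  obtain ⟨f, s₁, hf⟩ := Module.FinitePresentation.exists_lift_of_isLocalizedModule S fN fM
  obtain ⟨g, s₂, hg⟩ := Module.FinitePresentation.exists_lift_of_isLocalizedModule S fM fN
  have hgf : fM ∘ₗ (g ∘ₗ f) = fM ∘ₗ ((s₂ * s₁ : S) • LinearMap.id) := by
    rw [← LinearMap.comp_assoc, hg, LinearMap.smul_comp, hf, LinearMap.comp_smul, smul_smul]
    rfl
  obtain ⟨s₃, hs₃⟩ := Module.Finite.exists_smul_of_comp_eq_of_isLocalizedModule S fM _ _ hgf
  refine ⟨f, s₃ • g, s₃ * (s₂ * s₁), ?_⟩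
  rw [LinearMap.smul_comp, hs₃, smul_smul]
  rfl

lemma factorThruProjectiveIdeal_not_le_of_free_localizedModule {R : Type u} [CommRing R]
    (M : Type u) [AddCommGroup M] [Module R M] [Module.FinitePresentation R M]
    (p : Ideal R) [p.IsPrime]
    [Module.Free (Localization.AtPrime p) (LocalizedModule p.primeCompl M)] :
    ¬ factorThruProjectiveIdeal R (ModuleCat.of R M) ≤ p := by
  let Rₚ := Localization.AtPrime p
  let Mₚ := LocalizedModule p.primeCompl M
  let b := Module.Free.chooseBasis Rₚ Mₚ
  let α : (Module.Free.ChooseBasisIndex Rₚ Mₚ →₀ R) →ₗ[R] Mₚ :=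
    (b.repr.symm.restrictScalars R).toLinearMap ∘ₗ
      Finsupp.mapRange.linearMap (Algebra.linearMap R Rₚ)
  have : IsLocalizedModule p.primeCompl α := IsLocalizedModule.of_linearEquiv _ _ _
  obtain ⟨f, g, s, hgf⟩ := Module.exists_comp_eq_smul_id_of_isLocalizedModule p.primeCompl
    (LocalizedModule.mkLinearMap p.primeCompl M) α
  intro hle
  refine s.2 (hle ⟨ModuleCat.of R _, inferInstance, ModuleCat.ofHom f, ModuleCat.ofHom g, ?_⟩)
  exact ModuleCat.hom_ext hgf

lemma mem_radical_factorThruProjectiveIdeal {R : Type u} [CommRing R]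
    (M : Type u) [AddCommGroup M] [Module R M] [Module.FinitePresentation R M] {a : R}
    (ha : ∀ (p : Ideal R) [p.IsPrime],
      ¬ Module.Free (Localization.AtPrime p) (LocalizedModule p.primeCompl M) → a ∈ p) :
    a ∈ (factorThruProjectiveIdeal R (ModuleCat.of R M)).radical := by
  rw [Ideal.radical_eq_sInf, Submodule.mem_sInf]
  rintro (p : Ideal R) ⟨hIp, hp⟩
  by_contra hap
  have : Module.Free (Localization.AtPrime p) (LocalizedModule p.primeCompl M) :=
    not_not.mp (mt (ha p) hap)
  exact factorThruProjectiveIdeal_not_le_of_free_localizedModule M p hIp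

/-- If the nonfree locus of a finitely generated module `M` over a noetherian ring is
contained in `V(x₁, …, xₙ)`, then there is `k > 0` such that each `x_j^k` annihilates
`Ext^i_R(M, N)` for all `i > 0` and all finitely generated `N`. -/
theorem stmt4 {R : Type u} [CommRing R] [IsNoetherianRing R]
    (M : Type u) [AddCommGroup M] [Module R M] [Module.Finite R M]
    {n : ℕ} (x : Fin n → R)
    (h : ∀ (p : Ideal R) [p.IsPrime],
      ¬ Module.Free (Localization.AtPrime p) (LocalizedModule p.primeCompl M) →
      ∀ j : Fin n, x j ∈ p) :
    ∃ k : ℕ, 0 < k ∧ ∀ i : ℕ, 0 < i →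
      ∀ (N : Type u) [AddCommGroup N] [Module R N], Module.Finite R N →
      ∀ j : Fin n,
      ∀ e : ((Ext R (ModuleCat.{u} R) i).obj (op (ModuleCat.of R M))).obj (ModuleCat.of R N),
        (x j ^ k) • e = 0 := by
  have : Module.FinitePresentation R M := Module.finitePresentation_of_finite R M
  set I := factorThruProjectiveIdeal R (ModuleCat.of R M)
  have hrad : Ideal.span (Set.range x) ≤ I.radical := by
    rw [Ideal.span_le]
    rintro _ ⟨j, rfl⟩
    exact mem_radical_factorThruProjectiveIdeal M fun p _ hp => h p hp j
  obtain ⟨k, hk⟩ :=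
    Ideal.exists_pow_le_of_le_radical_of_fg hrad (Submodule.fg_span (Set.finite_range x))
  refine ⟨k + 1, k.succ_pos, fun i hi N _ _ _ j e => ?_⟩
  obtain ⟨m, rfl⟩ := Nat.exists_eq_add_one_of_ne_zero hi.ne'
  have hxk : x j ^ (k + 1) ∈ I :=
    I.pow_mem_of_pow_mem (hk (Ideal.pow_mem_pow (Ideal.subset_span (Set.mem_range_self j)) k))
      k.le_succ
  exact Ext_smul_eq_zero_of_mem_factorThruProjectiveIdeal hxk m e
end

section
/- Let R be a commutative noetherian ring, M a finitely generated R-module, and x ∈ R an element with x · Ext¹_R(M, Ω M) = 0. Then the Koszul complex K(x, M) = (0 → M →^x M → 0) is quasi-isomorphic to the complex (0 → Ω M ⊕ M → P₀ → 0), where P₀ → M is a surjection from a finitely generated projective module with kernel Ω M. In particular, H₀(x, M) = M/xM and H₁(x, M) = {m ∈ M : x m = 0} fit into an exact sequence 0 → H₁(x, M) → Ω M ⊕ M → P₀ → H₀(x, M) → 0. -/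
/-!
Since `x` kills the class of `0 → Ω M → P₀ → M → 0` in `Ext¹(M, Ω M)`, the pullback of this
extension along `x : M → M` splits: multiplication by `x` lifts through `π` to some `σ : M → P₀`.
For `f (w, m) = w + σ m`, the projection `(w, m) ↦ m` identifies `ker f` with `{m | x • m = 0}`
(the kernel element over `m` is `(-σ m, m)`), and `range f = π⁻¹(x M)`, so `P₀ / range f ≅ M / x M`.
-/

open CategoryTheory Opposite Function

universe u

namespace LinearMap

variable {R P M N : Type*} [Ring R] [AddCommGroup P] [Module R P] [AddCommGroup M] [Module R M]
  [AddCommGroup N] [Module R N] {π : P →ₗ[R] M} {g : N →ₗ[R] M} {σ : N →ₗ[R] P}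

theorem range_coprod_subtype_ker_eq_comap (hσ : π ∘ₗ σ = g) :
    range ((ker π).subtype.coprod σ) = (range g).comap π := by
  rw [range_coprod, Submodule.range_subtype, ← hσ, range_comp, Submodule.comap_map_eq, sup_comm]

theorem coprod_subtype_ker_apply_eq_zero_iff {w : ker π} {n : N} :
    (ker π).subtype.coprod σ (w, n) = 0 ↔ (w : P) = -σ n := by
  rw [coprod_apply, Submodule.subtype_apply, add_eq_zero_iff_eq_neg]

theorem snd_mem_ker_of_mem_ker_coprod_subtype_ker (hσ : π ∘ₗ σ = g)
    {p : ker π × N} (hp : p ∈ ker ((ker π).subtype.coprod σ)) : p.2 ∈ ker g := by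
  have hw : π p.1 = 0 := p.1.2
  rw [mem_ker, coprod_subtype_ker_apply_eq_zero_iff] at hp
  rw [mem_ker, ← hσ, comp_apply, ← neg_eq_zero, ← map_neg, ← hp, hw]

noncomputable def kerCoprodSubtypeKerEquiv (hσ : π ∘ₗ σ = g) :
    ker ((ker π).subtype.coprod σ) ≃ₗ[R] ker g := by
  refine LinearEquiv.ofBijective ((snd R (ker π) N).restrict
    fun _ hp => snd_mem_ker_of_mem_ker_coprod_subtype_ker hσ hp) ⟨?_, ?_⟩
  · rintro ⟨⟨w₁, n₁⟩, h₁⟩ ⟨⟨w₂, n₂⟩, h₂⟩ h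
    obtain rfl : n₁ = n₂ := congrArg Subtype.val h
    rw [mem_ker, coprod_subtype_ker_apply_eq_zero_iff] at h₁ h₂
    obtain rfl : w₁ = w₂ := Subtype.ext (h₁.trans h₂.symm)
    rfl
  · rintro ⟨n, hn⟩
    have hw : -σ n ∈ ker π := by rw [mem_ker, map_neg, ← comp_apply, hσ, hn, neg_zero]
    exact ⟨⟨(⟨-σ n, hw⟩, n), coprod_subtype_ker_apply_eq_zero_iff.2 rfl⟩, rfl⟩

noncomputable def quotRangeCoprodSubtypeKerEquiv (hπ : Surjective π) (hσ : π ∘ₗ σ = g) :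
    (P ⧸ range ((ker π).subtype.coprod σ)) ≃ₗ[R] M ⧸ range g :=
  (Submodule.quotEquivOfEq _ _ (by
      rw [range_coprod_subtype_ker_eq_comap hσ, ker_comp, Submodule.ker_mkQ])).trans
    (((range g).mkQ ∘ₗ π).quotKerEquivOfSurjective ((range g).mkQ_surjective.comp hπ))

end LinearMap

namespace CategoryTheory

theorem ShortComplex.exists_f_eq_smul_of_mem_annihilator_homology {R : Type*} [CommRing R]
    (S : ShortComplex (ModuleCat R)) {x : R} (hx : x ∈ Module.annihilator R S.homology)
    {z : S.X₂} (hz : S.g z = 0) : ∃ y, S.f y = x • z := by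
  rw [S.moduleCatHomologyIso.toLinearEquiv.annihilator_eq] at hx
  let c : LinearMap.ker S.g.hom := ⟨z, hz⟩
  obtain ⟨y, hy⟩ := (Submodule.Quotient.mk_eq_zero _).1
    (Module.mem_annihilator.1 hx ((LinearMap.range S.moduleCatToCycles).mkQ c))
  exact ⟨y, congrArg Subtype.val hy⟩

variable {R : Type*} [CommRing R] {C : Type*} [Category C] [Abelian C] [Linear R C]
  [EnoughProjectives C]

theorem ProjectiveResolution.exists_d_comp_eq_smul_of_mem_annihilator_ext_one {X Y : C}
    (P : ProjectiveResolution X) {x : R}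
    (hx : x ∈ Module.annihilator R (((Ext R C 1).obj (op X)).obj Y))
    {ρ : P.complex.X 1 ⟶ Y} (hρ : P.complex.d 2 1 ≫ ρ = 0) :
    ∃ γ : P.complex.X 0 ⟶ Y, P.complex.d 1 0 ≫ γ = x • ρ := by
  rw [(P.isoExt 1 Y ≪≫ (P.complex.linearYonedaObj R Y).homologyIsoSc' 0 1 2
    (by simp) (by simp)).toLinearEquiv.annihilator_eq] at hx
  exact ((P.complex.linearYonedaObj R Y).sc' 0 1 2).exists_f_eq_smul_of_mem_annihilator_homology
    hx (z := ρ) hρ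

theorem ShortComplex.ShortExact.exists_comp_g_eq_smul_id {S : ShortComplex C}
    (hS : S.ShortExact) [Projective S.X₂] {x : R}
    (hx : x ∈ Module.annihilator R (((Ext R C 1).obj (Opposite.op S.X₃)).obj S.X₁)) :
    ∃ σ : S.X₃ ⟶ S.X₂, σ ≫ S.g = x • 𝟙 S.X₃ := by
  have := hS.mono_f
  have := hS.epi_g
  let Q := ProjectiveResolution.of S.X₃
  let q : Q.complex.X 0 ⟶ S.X₃ := Q.π.f 0
  have : Epi q := inferInstanceAs (Epi (Q.π.f 0))
  let α : Q.complex.X 0 ⟶ S.X₂ := Projective.factorThru q S.g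
  have hα : α ≫ S.g = q := Projective.factorThru_comp _ _
  -- the cocycle `Q₁ ⟶ X₁` representing the class of `S` in `Ext¹(X₃, X₁)`
  let ρ := hS.exact.lift (Q.complex.d 1 0 ≫ α)
    (by rw [Category.assoc, hα]; exact Q.complex_d_comp_π_f_zero)
  have hρ : Q.complex.d 2 1 ≫ ρ = 0 := by
    rw [← cancel_mono S.f, Category.assoc, hS.exact.lift_f, ← Category.assoc, Q.complex.d_comp_d,
      Limits.zero_comp, Limits.zero_comp]
  obtain ⟨γ, hγ⟩ := Q.exists_d_comp_eq_smul_of_mem_annihilator_ext_one hx hρ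
  obtain ⟨σ, hσ⟩ := Limits.CokernelCofork.IsColimit.desc' Q.isColimitCokernelCofork
    (x • α - γ ≫ S.f) (by
      rw [Preadditive.comp_sub, Linear.comp_smul, ← Category.assoc, hγ, Linear.smul_comp,
        hS.exact.lift_f, sub_self])
  refine ⟨σ, ?_⟩
  rw [← cancel_epi q]
  calc q ≫ σ ≫ S.g = (x • α - γ ≫ S.f) ≫ S.g := by rw [← hσ, Category.assoc]; rfl
    _ = q ≫ (x • 𝟙 S.X₃) := by
      rw [Preadditive.sub_comp, Linear.smul_comp, hα, Category.assoc, S.zero, Limits.comp_zero,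
        sub_zero, Linear.comp_smul, Category.comp_id]

end CategoryTheory

theorem stmt13_general {R : Type u} [CommRing R] (M P₀ : Type u)
    [AddCommGroup M] [Module R M]
    [AddCommGroup P₀] [Module R P₀] [Module.Projective R P₀]
    (π : P₀ →ₗ[R] M) (hπ : Surjective π) (x : R)
    (hx : ∀ e : ((Ext R (ModuleCat.{u} R) 1).obj
        (op (ModuleCat.of R M))).obj (ModuleCat.of R (LinearMap.ker π)),
      x • e = 0) :
    ∃ f : (↥(LinearMap.ker π) × M) →ₗ[R] P₀,
      Nonempty ((↥(LinearMap.ker f)) ≃ₗ[R] ↥(LinearMap.ker (LinearMap.lsmul R M x))) ∧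
      Nonempty ((P₀ ⧸ LinearMap.range f)
        ≃ₗ[R] (M ⧸ LinearMap.range (LinearMap.lsmul R M x))) := by
  have : Projective (ModuleCat.of R P₀) := (IsProjective.iff_projective P₀).1 inferInstance
  obtain ⟨σ, hσ⟩ := (LinearMap.shortExact_shortComplexKer hπ).exists_comp_g_eq_smul_id
    (Module.mem_annihilator.2 hx)
  have hσ' : π ∘ₗ σ.hom = LinearMap.lsmul R M x := congrArg ModuleCat.Hom.hom hσ
  exact ⟨_, ⟨LinearMap.kerCoprodSubtypeKerEquiv hσ'⟩,
    ⟨LinearMap.quotRangeCoprodSubtypeKerEquiv hπ hσ'⟩⟩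

/-- If `x · Ext¹_R(M, Ω M) = 0`, the Koszul complex `K(x, M) = (0 → M →ˣ M → 0)` is
quasi-isomorphic to `(0 → Ω M ⊕ M → P₀ → 0)`: there is a linear map
`f : Ω M ⊕ M → P₀` whose kernel is isomorphic to `H₁(x, M) = {m | xm = 0}` and whose
cokernel is isomorphic to `H₀(x, M) = M/xM`; i.e. there is an exact sequence
`0 → H₁(x, M) → Ω M ⊕ M → P₀ → H₀(x, M) → 0`. -/
theorem stmt13 {R : Type u} [CommRing R] [IsNoetherianRing R] (M P₀ : Type u)
    [AddCommGroup M] [Module R M] [Module.Finite R M]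
    [AddCommGroup P₀] [Module R P₀] [Module.Projective R P₀] [Module.Finite R P₀]
    (π : P₀ →ₗ[R] M) (hπ : Surjective π) (x : R)
    (hx : ∀ e : ((Ext R (ModuleCat.{u} R) 1).obj
        (op (ModuleCat.of R M))).obj (ModuleCat.of R (LinearMap.ker π)),
      x • e = 0) :
    ∃ f : (↥(LinearMap.ker π) × M) →ₗ[R] P₀,
      Nonempty ((↥(LinearMap.ker f)) ≃ₗ[R] ↥(LinearMap.ker (LinearMap.lsmul R M x))) ∧
      Nonempty ((P₀ ⧸ LinearMap.range f)
        ≃ₗ[R] (M ⧸ LinearMap.range (LinearMap.lsmul R M x))) :=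
  stmt13_general M P₀ π hπ x hx
end
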